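/- The ratio of consecutive central trinomial coefficients converges: lim_{n→∞} T_{n−1}/T_n = 1/3. -/

import Mathlib

open Filter

/-- The central trinomial coefficient `T_n = Σ_{k=0}^{⌊n/2⌋} binom(n,2k) binom(2k,k)`. -/
def centralTrinomial (n : ℕ) : ℕ :=
  ∑ k ∈ Finset.range (n / 2 + 1), n.choose (2 * k) * (2 * k).choose k

namespace CT

open Polynomial Finset

lemma key (n : ℕ) (k : ℕ) (hk : k ≤ n) :
    n.choose k * (n-k).choose k = n.choose (2*k) * (2*k).choose k := by
  rcases le_or_gt (2*k) n with h | h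
  · rw [Nat.choose_mul (n := n) (k := 2*k) (s := k) (by omega)]
    congr 2
    omega
  · rw [Nat.choose_eq_zero_of_lt (show n - k < k by omega),
      Nat.choose_eq_zero_of_lt h, mul_zero, zero_mul]

lemma sum_eq (n : ℕ) :
    ∑ k ∈ range (n+1), n.choose k * k.choose (n-k) = centralTrinomial n := by
  rw [← Finset.sum_range_reflect]
  have h1 : ∀ k ∈ range (n+1),
      n.choose (n + 1 - 1 - k) * (n + 1 - 1 - k).choose (n - (n + 1 - 1 - k)) =
      n.choose (2*k) * (2*k).choose k := by
    intro k hk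
    simp only [mem_range] at hk
    have hk' : k ≤ n := by omega
    rw [show n + 1 - 1 - k = n - k by omega, show n - (n - k) = k by omega,
      Nat.choose_symm hk', key n k hk']
  rw [Finset.sum_congr rfl h1, centralTrinomial]
  symm
  apply Finset.sum_subset
  · intro k hk; simp only [mem_range] at *; omega
  · intro k _ hk
    simp only [mem_range] at hk
    rw [Nat.choose_eq_zero_of_lt (show n < 2*k by omega), zero_mul]

noncomputable def Pt : ℝ[X] := 1 + X + X^2

lemma coeff_Pt_pow (n : ℕ) :
    (Pt ^ n).coeff n = ((∑ k ∈ range (n+1), n.choose k * k.choose (n-k) : ℕ) : ℝ) := by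
  have h : Pt ^ n = ∑ k ∈ range (n+1), X^k * (1+X)^k * C ((n.choose k : ℝ)) := by
    rw [Pt, show (1 : ℝ[X]) + X + X^2 = X*(1+X) + 1 by ring, add_pow]
    refine Finset.sum_congr rfl fun k _ => ?_
    rw [one_pow, mul_one, mul_pow, C_eq_natCast]
  rw [h, finset_sum_coeff]
  push_cast
  refine Finset.sum_congr rfl fun k hk => ?_
  simp only [mem_range] at hk
  rw [coeff_mul_C, mul_comm (X^k), coeff_mul_X_pow' _ k n, if_pos (by omega : k ≤ n),
    coeff_one_add_X_pow, mul_comm]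

lemma cT_coeff (n : ℕ) : ((centralTrinomial n : ℝ)) = (Pt ^ n).coeff n := by
  rw [coeff_Pt_pow, sum_eq]

lemma deriv_Pt : derivative Pt = 1 + 2*X := by
  rw [Pt]; simp [derivative_X_pow, map_ofNat]; norm_num

lemma coeff_one_add_two_X_mul (Q : ℝ[X]) (m : ℕ) :
    ((1 + 2*X) * Q).coeff (m+1) = Q.coeff (m+1) + 2 * Q.coeff m := by
  rw [show (1 + 2*X) * Q = Q + (X*Q + X*Q) by ring, coeff_add, coeff_add, coeff_X_mul]
  ring

lemma deriv_rel (n m : ℕ) :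
    ((m:ℝ) + 2) * (Pt^(n+1)).coeff (m+2) =
      ((n:ℝ)+1) * ((Pt^n).coeff (m+1) + 2 * (Pt^n).coeff m) := by
  have h := coeff_derivative (Pt^(n+1)) (m+1)
  rw [derivative_pow, deriv_Pt, Nat.add_sub_cancel] at h
  rw [show C (((n+1:ℕ)):ℝ) * Pt ^ n * (1 + 2*X) = C (((n+1:ℕ)):ℝ) * ((1+2*X) * Pt^n) by ring,
    coeff_C_mul, coeff_one_add_two_X_mul, show m+1+1 = m+2 from rfl] at h
  push_cast at h
  rw [h]; ring

lemma coeff_Pt_mul (Q : ℝ[X]) (m : ℕ) :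
    (Pt * Q).coeff (m+2) = Q.coeff (m+2) + Q.coeff (m+1) + Q.coeff m := by
  rw [Pt, add_mul, add_mul, one_mul, coeff_add, coeff_add,
    show m + 2 = (m+1)+1 from rfl, coeff_X_mul, show (X^2 : ℝ[X]) * Q = X * (X * Q) by ring,
    coeff_X_mul, coeff_X_mul]

lemma ode_rel (N m : ℕ) :
    ((m:ℝ)+4) * (Pt^(N+1)).coeff (m+4) + ((m:ℝ)+3) * (Pt^(N+1)).coeff (m+3)
      + ((m:ℝ)+2) * (Pt^(N+1)).coeff (m+2)
    = ((N:ℝ)+1) * ((Pt^(N+1)).coeff (m+3) + 2 * (Pt^(N+1)).coeff (m+2)) := by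
  have hmain : Pt * derivative (Pt^(N+1)) = C ((N:ℝ)+1) * ((1 + 2*X) * Pt^(N+1)) := by
    rw [derivative_pow, deriv_Pt, Nat.add_sub_cancel, pow_succ]
    push_cast
    ring
  have h := congrArg (fun p => p.coeff (m+3)) hmain
  rw [show m+3 = (m+1)+2 from rfl, coeff_Pt_mul] at h
  rw [coeff_C_mul, show (m+1)+2 = (m+2)+1 from rfl, coeff_one_add_two_X_mul] at h
  rw [coeff_derivative, coeff_derivative, coeff_derivative] at h
  rw [show (m+2)+1+1 = m+4 from rfl, show (m+2)+1 = m+3 from rfl, show m+1+1 = m+2 from rfl] at h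
  push_cast at h ⊢
  linarith [h]

lemma Pt_rec (m : ℕ) :
    ((m:ℝ)+6) * (Pt^(m+6)).coeff (m+6)
      = (2*(m:ℝ)+11) * (Pt^(m+5)).coeff (m+5) + 3*((m:ℝ)+5) * (Pt^(m+4)).coeff (m+4) := by
  set a := (Pt^(m+4)).coeff (m+4) with ha
  set s := (Pt^(m+4)).coeff (m+3) with hs
  set u := (Pt^(m+4)).coeff (m+2) with hu
  set S := (Pt^(m+5)).coeff (m+4) with hS
  set T1 := (Pt^(m+5)).coeff (m+5) with hT1
  set T2 := (Pt^(m+6)).coeff (m+6) with hT2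
  have h1 := deriv_rel (m+4) (m+3)
  rw [show m+3+2 = m+5 by omega, show m+3+1 = m+4 by omega] at h1
  push_cast at h1
  have h2 := deriv_rel (m+4) (m+2)
  rw [show m+2+2 = m+4 by omega, show m+2+1 = m+3 by omega] at h2
  push_cast at h2
  have h3 := deriv_rel (m+5) (m+4)
  rw [show m+4+2 = m+6 by omega, show m+4+1 = m+5 by omega, show m+5+1 = m+6 by omega] at h3
  push_cast at h3
  have h4 := ode_rel (m+3) m
  rw [show m+3+1 = m+4 by omega] at h4
  push_cast at h4
  have h5 : ((m:ℝ)+5) ≠ 0 := by positivity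
  have h6 : ((m:ℝ)+6) ≠ 0 := by positivity
  have e1 : T1 = a + 2*s := mul_left_cancel₀ h5 (by linear_combination h1)
  have e3 : T2 = T1 + 2*S := mul_left_cancel₀ h6 (by linear_combination h3)
  have h7 : ((m:ℝ)+4) ≠ 0 := by positivity
  have key : ((m:ℝ)+4) * (((m:ℝ)+6) * T2)
      = ((m:ℝ)+4) * ((2*(m:ℝ)+11) * T1 + 3*((m:ℝ)+5) * a) := by
    linear_combination (((m:ℝ)+4)*((m:ℝ)+6))*e3 + (2*((m:ℝ)+6))*h2
      - (4*((m:ℝ)+5))*h4 - (((m:ℝ)+4)*((m:ℝ)+5))*e1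
  exact mul_left_cancel₀ h7 key

lemma cT_rec (m : ℕ) :
    ((m:ℝ)+6) * (centralTrinomial (m+6) : ℝ)
      = (2*(m:ℝ)+11) * (centralTrinomial (m+5) : ℝ)
        + 3*((m:ℝ)+5) * (centralTrinomial (m+4) : ℝ) := by
  rw [cT_coeff, cT_coeff, cT_coeff]; exact Pt_rec m

lemma cT_pos (n : ℕ) : 0 < centralTrinomial n := by
  rw [centralTrinomial]
  apply Finset.sum_pos
  · intro k hk
    simp only [mem_range] at hk
    have h2 : 2*k ≤ n := by omega
    exact Nat.mul_pos (Nat.choose_pos h2) (Nat.choose_pos (by omega))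
  · exact ⟨0, by simp⟩

lemma cT_pos' (n : ℕ) : (0:ℝ) < (centralTrinomial n : ℝ) := by
  exact_mod_cast cT_pos n

lemma ratio_bounds : ∀ m : ℕ,
    3*((m:ℝ)+4) * (centralTrinomial (m+4) : ℝ) ≤ ((m:ℝ)+5) * (centralTrinomial (m+5) : ℝ) ∧
    (centralTrinomial (m+5) : ℝ) ≤ 3 * (centralTrinomial (m+4) : ℝ) := by
  intro m
  induction m with
  | zero =>
      have h4 : centralTrinomial 4 = 19 := by simp [centralTrinomial, Finset.sum_range_succ, Nat.choose]
      have h5 : centralTrinomial 5 = 51 := by simp [centralTrinomial, Finset.sum_range_succ, Nat.choose]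
      rw [h4, h5]
      norm_num
  | succ p ih =>
      obtain ⟨hL, ihu⟩ := ih
      have hrec := cT_rec p
      set T4 := (centralTrinomial (p+4) : ℝ)
      set T5 := (centralTrinomial (p+5) : ℝ)
      set T6 := (centralTrinomial (p+6) : ℝ)
      have hT4 : 0 < T4 := cT_pos' _
      have hT5 : 0 < T5 := cT_pos' _
      have hT6 : 0 < T6 := cT_pos' _
      have hp : (0:ℝ) ≤ (p:ℝ) := Nat.cast_nonneg p
      constructor
      · -- lower : 3*(p+5)*T5 ≤ (p+6)*T6
        push_cast [show p+1+4 = p+5 by omega, show p+1+5 = p+6 by omega]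
        nlinarith [hrec, mul_le_mul_of_nonneg_left ihu (show (0:ℝ) ≤ (p:ℝ)+5 by positivity)]
      · -- upper : T6 ≤ 3*T5
        push_cast [show p+1+4 = p+5 by omega, show p+1+5 = p+6 by omega]
        have h0 : (0:ℝ) < (p:ℝ)+6 := by positivity
        have key : ((p:ℝ)+6)*T6 ≤ ((p:ℝ)+6)*(3*T5) := by
          nlinarith [hrec, mul_le_mul_of_nonneg_left hL (show (0:ℝ) ≤ (p:ℝ)+7 by positivity),
            hT4, hT5, hp]
        exact le_of_mul_le_mul_left key h0

end CT

/-- `T_{n−1} / T_n → 1/3` as `n → ∞`. -/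
theorem centralTrinomial_ratio_tendsto :
    Tendsto (fun n : ℕ => (centralTrinomial (n - 1) : ℝ) / (centralTrinomial n : ℝ))
      atTop (nhds (1 / 3)) := by
  have hupper : ∀ n : ℕ, 5 ≤ n →
      (centralTrinomial (n-1) : ℝ) / (centralTrinomial n : ℝ)
        ≤ (n:ℝ)/(3*(n:ℝ)-3) := by
    intro n hn
    obtain ⟨m, rfl⟩ : ∃ m, n = m + 5 := ⟨n - 5, by omega⟩
    obtain ⟨hl, _⟩ := CT.ratio_bounds m
    have hT5 := CT.cT_pos' (m+5)
    have hden : (0:ℝ) < 3*((m+5:ℕ):ℝ)-3 := by push_cast; linarith [Nat.cast_nonneg (α := ℝ) m]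
    rw [show m+5-1 = m+4 by omega, div_le_div_iff₀ hT5 hden]
    push_cast
    nlinarith [hl]
  have hlower : ∀ n : ℕ, 5 ≤ n →
      (1:ℝ)/3 ≤ (centralTrinomial (n-1) : ℝ) / (centralTrinomial n : ℝ) := by
    intro n hn
    obtain ⟨m, rfl⟩ : ∃ m, n = m + 5 := ⟨n - 5, by omega⟩
    obtain ⟨_, hu⟩ := CT.ratio_bounds m
    have hT5 := CT.cT_pos' (m+5)
    rw [show m+5-1 = m+4 by omega, le_div_iff₀ hT5]
    linarith
  have htop : Tendsto (fun n : ℕ => (n:ℝ)/(3*(n:ℝ)-3)) atTop (nhds (1/3)) := by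
    have h1 : Tendsto (fun n : ℕ => 3 - 3/(n:ℝ)) atTop (nhds 3) := by
      have h2 : Tendsto (fun n : ℕ => 3/(n:ℝ)) atTop (nhds 0) := by
        simpa [div_eq_mul_inv] using ((tendsto_one_div_atTop_nhds_zero_nat (𝕜 := ℝ)).const_mul 3)
      simpa using tendsto_const_nhds.sub h2
    have h3 := h1.inv₀ (by norm_num : (3:ℝ) ≠ 0)
    have h4 : Tendsto (fun n : ℕ => (3 - 3/(n:ℝ))⁻¹) atTop (nhds (1/3)) := by
      norm_num at h3 ⊢; exact h3
    apply h4.congr'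
    filter_upwards [eventually_ge_atTop 1] with n hn
    have hn' : (0:ℝ) < (n:ℝ) := by exact_mod_cast Nat.pos_of_ne_zero (by omega)
    rw [eq_comm]
    field_simp
  apply tendsto_of_tendsto_of_tendsto_of_le_of_le' tendsto_const_nhds htop
  · filter_upwards [eventually_ge_atTop 5] with n hn using hlower n hn
  · filter_upwards [eventually_ge_atTop 5] with n hn using hupper n hn
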